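/- arXiv:math/0106030 — 3 statements merged into one kernel-verified Lean document; each statement's English description precedes it below -/
import Mathlib

section
/- For every σ > 0, every κ ∈ ℂ with Re κ > 0, and every integer m ≥ 0, one has (1/2π) ∫_ℝ ((σ+iξ)^m/(σ−iξ)^{m+1}) · (1/(κ+iξ)) dξ = (σ−κ)^m/(σ+κ)^{m+1}. -/
/-!
Write `x = σ + iξ`, `y = σ - iξ`, `z = κ + iξ`. Since `x - z = σ - κ`, `x + y = 2σ` and
`y + z = σ + κ`,
`x^(m+1) / (y^(m+2) z) = (σ - κ)/(σ + κ) · x^m / (y^(m+1) z) + 2σ/(σ + κ) · x^m / y^(m+2)`.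
The last term is the derivative of `(x/y)^(m+1) / (2iσ(m+1))`, and `x/y → -1` at both ends of `ℝ`,
so it integrates to `0`; this is the induction step in `m`. In the base case `1/(yz)` has the
primitive `i (log y - log z)/(σ + κ)`: the moduli of `y` and `z` grow alike, while `arg y - arg z`
runs from `π` down to `-π`, so the integral is `2π/(σ + κ)`.
-/

open MeasureTheory Complex Filter Topology Bornology
open scoped Real

lemma add_I_mul_ne_zero {w : ℂ} (hw : w.re ≠ 0) (ξ : ℝ) : w + I * ξ ≠ 0 := by
  intro h
  simpa [hw] using congrArg re h

lemma sub_I_mul_ne_zero {w : ℂ} (hw : w.re ≠ 0) (ξ : ℝ) : w - I * ξ ≠ 0 := by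
  intro h
  simpa [hw] using congrArg re h

lemma norm_ofReal_add_I_mul (σ ξ : ℝ) : ‖(σ : ℂ) + I * ξ‖ = ‖(σ : ℂ) - I * ξ‖ := by
  rw [← norm_conj]
  simp [sub_eq_add_neg]

lemma norm_pow_div_pow_add {𝕜 : Type*} [NormedDivisionRing 𝕜] {x y : 𝕜} (h : ‖x‖ = ‖y‖)
    (hy : y ≠ 0) (m k : ℕ) : ‖x ^ m / y ^ (m + k)‖ = ‖(y ^ k)⁻¹‖ := by
  have hy' : ‖y‖ ^ m ≠ 0 := pow_ne_zero _ (norm_ne_zero_iff.mpr hy)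
  rw [norm_div, norm_inv, norm_pow, norm_pow, norm_pow, h, pow_add, div_mul_cancel_left₀ hy']

lemma integrable_inv_sq_norm_add_I_mul {w : ℂ} (hw : w.re ≠ 0) :
    Integrable fun ξ : ℝ => (‖w + I * ξ‖ ^ 2)⁻¹ := by
  have h := ((integrable_inv_one_add_sq.comp_div hw).const_mul (w.re ^ 2)⁻¹).comp_add_right w.im
  refine h.congr (Eventually.of_forall fun ξ => ?_)
  simp only [Complex.sq_norm, normSq_apply]
  simp
  field_simp
  ring

lemma integrable_inv_mul_sub_I_mul_add_I_mul {a b : ℂ} (ha : a.re ≠ 0) (hb : b.re ≠ 0) :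
    Integrable fun ξ : ℝ => ((a - I * ξ) * (b + I * ξ))⁻¹ := by
  have hdom := ((integrable_inv_sq_norm_add_I_mul (w := -a) (by simpa using ha)).add
    (integrable_inv_sq_norm_add_I_mul hb)).div_const 2
  refine hdom.mono' (by fun_prop) (Eventually.of_forall fun ξ => ?_)
  rw [norm_inv, norm_mul, ← norm_neg (a - _), neg_sub, sub_eq_neg_add, mul_inv]
  have := two_mul_le_add_sq ‖-a + I * ξ‖⁻¹ ‖b + I * ξ‖⁻¹
  rw [inv_pow, inv_pow] at this
  simp only [Pi.add_apply]
  linarith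

lemma integrable_pow_div_pow_add_two {σ : ℝ} (hσ : σ ≠ 0) (m : ℕ) :
    Integrable fun ξ : ℝ => ((σ : ℂ) + I * ξ) ^ m / ((σ : ℂ) - I * ξ) ^ (m + 2) := by
  have hre : (σ : ℂ).re ≠ 0 := by simpa using hσ
  refine (integrable_inv_mul_sub_I_mul_add_I_mul hre hre).mono
    (Measurable.aestronglyMeasurable (by fun_prop)) (ae_of_all _ fun ξ => le_of_eq ?_)
  rw [norm_pow_div_pow_add (norm_ofReal_add_I_mul σ ξ) (sub_I_mul_ne_zero hre ξ),
    norm_inv, norm_inv, norm_mul, norm_pow, norm_ofReal_add_I_mul, sq]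

lemma integrable_pow_div_pow_succ_mul_one_div {σ : ℝ} (hσ : σ ≠ 0) {κ : ℂ} (hκ : κ.re ≠ 0)
    (m : ℕ) : Integrable fun ξ : ℝ =>
      ((σ : ℂ) + I * ξ) ^ m / ((σ : ℂ) - I * ξ) ^ (m + 1) * (1 / (κ + I * ξ)) := by
  have hre : (σ : ℂ).re ≠ 0 := by simpa using hσ
  refine (integrable_inv_mul_sub_I_mul_add_I_mul hre hκ).mono
    (Measurable.aestronglyMeasurable (by fun_prop)) (ae_of_all _ fun ξ => le_of_eq ?_)
  rw [norm_mul, norm_pow_div_pow_add (norm_ofReal_add_I_mul σ ξ) (sub_I_mul_ne_zero hre ξ),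
    one_div, pow_one, ← norm_mul, mul_inv]

lemma Complex.arg_eq_arctan_of_re_pos {z : ℂ} (hz : 0 < z.re) :
    arg z = Real.arctan (z.im / z.re) := by
  have hz0 : z ≠ 0 := fun h => by simp [h] at hz
  have hbound := abs_lt.mp (abs_arg_lt_pi_div_two_iff.mpr (Or.inl hz))
  rw [← Real.arctan_tan hbound.1 hbound.2, Real.tan_eq_sin_div_cos, sin_arg, cos_arg hz0,
    div_div_div_cancel_right₀ (norm_ne_zero_iff.mpr hz0)]

lemma tendsto_arg_add_I_mul_atTop {w : ℂ} (hw : 0 < w.re) :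
    Tendsto (fun ξ : ℝ => arg (w + I * ξ)) atTop (𝓝 (π / 2)) := by
  have hlin : Tendsto (fun ξ : ℝ => (w.im + ξ) / w.re) atTop atTop :=
    (tendsto_atTop_add_const_left _ _ tendsto_id).atTop_div_const hw
  refine (Real.tendsto_arctan_atTop.mono_right nhdsWithin_le_nhds).comp hlin |>.congr fun ξ => ?_
  rw [Function.comp_apply, arg_eq_arctan_of_re_pos (by simpa using hw)]
  simp

lemma tendsto_arg_add_I_mul_atBot {w : ℂ} (hw : 0 < w.re) :
    Tendsto (fun ξ : ℝ => arg (w + I * ξ)) atBot (𝓝 (-(π / 2))) := by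
  have hlin : Tendsto (fun ξ : ℝ => (w.im + ξ) / w.re) atBot atBot :=
    (tendsto_atBot_add_const_left _ _ tendsto_id).atBot_div_const hw
  refine (Real.tendsto_arctan_atBot.mono_right nhdsWithin_le_nhds).comp hlin |>.congr fun ξ => ?_
  rw [Function.comp_apply, arg_eq_arctan_of_re_pos (by simpa using hw)]
  simp

lemma tendsto_add_I_mul_div_add_I_mul (a b : ℂ) :
    Tendsto (fun ξ : ℝ => (a + I * ξ) / (b + I * ξ)) (cobounded ℝ) (𝓝 1) := by
  have hinv : Tendsto (fun ξ : ℝ => ((ξ : ℂ))⁻¹) (cobounded ℝ) (𝓝 0) := by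
    simpa [Function.comp_def] using
      (continuous_ofReal.tendsto 0).comp (tendsto_inv₀_cobounded (α := ℝ))
  have hcont : ContinuousAt (fun z : ℂ => (a * z + I) / (b * z + I)) 0 := by
    fun_prop (disch := simp)
  have h1 : (a * 0 + I) / (b * 0 + I) = 1 := by simp
  refine (h1 ▸ hcont.tendsto.comp hinv).congr' ?_
  filter_upwards [eventually_ne_cobounded 0] with ξ hξ
  have hξ : (ξ : ℂ) ≠ 0 := by exact_mod_cast hξ
  simp only [Function.comp_apply]
  field_simp

lemma log_sub_log_eq {z w : ℂ} (hz : z ≠ 0) (hw : w ≠ 0) :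
    log z - log w = Real.log ‖z / w‖ + (arg z - arg w) * I := by
  apply Complex.ext <;>
    simp [log_re, log_im, Real.log_div (norm_ne_zero_iff.mpr hz) (norm_ne_zero_iff.mpr hw)]

lemma tendsto_log_sub_I_mul_sub_log_add_I_mul {a b : ℂ} (ha : a.re ≠ 0) (hb : b.re ≠ 0)
    {l : Filter ℝ} (hl : l ≤ cobounded ℝ) {θ : ℝ}
    (harg : Tendsto (fun ξ : ℝ => arg (a - I * ξ) - arg (b + I * ξ)) l (𝓝 θ)) :
    Tendsto (fun ξ : ℝ => log (a - I * ξ) - log (b + I * ξ)) l (𝓝 (θ * I)) := by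
  have hmod : Tendsto (fun ξ : ℝ => Real.log ‖(a - I * ξ) / (b + I * ξ)‖) l (𝓝 0) := by
    have h := ((tendsto_add_I_mul_div_add_I_mul (-a) b).mono_left hl).norm.log (by norm_num)
    simp only [norm_one, Real.log_one] at h
    refine h.congr fun ξ => ?_
    rw [show -a + I * ξ = -(a - I * ξ) by ring, neg_div, norm_neg]
  have h := (continuous_ofReal.tendsto 0).comp hmod |>.add
    ((continuous_ofReal.tendsto θ).comp harg |>.mul_const I)
  simp only [ofReal_zero, zero_add] at h
  refine h.congr fun ξ => ?_
  rw [log_sub_log_eq (sub_I_mul_ne_zero ha ξ) (add_I_mul_ne_zero hb ξ)]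
  simp

lemma hasDerivAt_add_I_mul (a : ℂ) (ξ : ℝ) : HasDerivAt (fun ξ : ℝ => a + I * ξ) I ξ := by
  simpa using ((hasDerivAt_id ξ).ofReal_comp.const_mul I).const_add a

lemma hasDerivAt_sub_I_mul (a : ℂ) (ξ : ℝ) : HasDerivAt (fun ξ : ℝ => a - I * ξ) (-I) ξ := by
  simpa using ((hasDerivAt_id ξ).ofReal_comp.const_mul I).const_sub a

theorem integral_inv_mul_sub_I_mul_add_I_mul {a b : ℂ} (ha : 0 < a.re) (hb : 0 < b.re) :
    ∫ ξ : ℝ, ((a - I * ξ) * (b + I * ξ))⁻¹ = 2 * π / (a + b) := by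
  have hab : a + b ≠ 0 := fun h => by
    have := congrArg re h
    simp only [add_re, zero_re] at this
    linarith
  have hderiv : ∀ ξ : ℝ, HasDerivAt
      (fun ξ : ℝ => I / (a + b) * (log (a - I * ξ) - log (b + I * ξ)))
      ((a - I * ξ) * (b + I * ξ))⁻¹ ξ := by
    intro ξ
    have h₁ := (hasDerivAt_sub_I_mul a ξ).clog_real
      (mem_slitPlane_iff.mpr (Or.inl (by simpa using ha)))
    have h₂ := (hasDerivAt_add_I_mul b ξ).clog_real
      (mem_slitPlane_iff.mpr (Or.inl (by simpa using hb)))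
    refine ((h₁.sub h₂).const_mul (I / (a + b))).congr_deriv ?_
    have := sub_I_mul_ne_zero ha.ne' ξ
    have := add_I_mul_ne_zero hb.ne' ξ
    field_simp
    linear_combination -(a + b) * I_sq
  have hneg : ∀ ξ : ℝ, a - I * ξ = a + I * ↑(-ξ) := fun ξ => by push_cast; ring
  have hargTop :
      Tendsto (fun ξ : ℝ => arg (a - I * ξ) - arg (b + I * ξ)) atTop (𝓝 (-π)) := by
    have h := ((tendsto_arg_add_I_mul_atBot ha).comp tendsto_neg_atTop_atBot).sub
      (tendsto_arg_add_I_mul_atTop hb)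
    rw [show -(π / 2) - π / 2 = -π by ring] at h
    exact h.congr fun ξ => by simp [hneg]
  have hargBot :
      Tendsto (fun ξ : ℝ => arg (a - I * ξ) - arg (b + I * ξ)) atBot (𝓝 π) := by
    have h := ((tendsto_arg_add_I_mul_atTop ha).comp tendsto_neg_atBot_atTop).sub
      (tendsto_arg_add_I_mul_atBot hb)
    rw [show π / 2 - -(π / 2) = π by ring] at h
    exact h.congr fun ξ => by simp [hneg]
  have htop := (tendsto_log_sub_I_mul_sub_log_add_I_mul ha.ne' hb.ne'
    IsOrderBornology.atTop_le_cobounded hargTop).const_mul (I / (a + b))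
  have hbot := (tendsto_log_sub_I_mul_sub_log_add_I_mul ha.ne' hb.ne'
    IsOrderBornology.atBot_le_cobounded hargBot).const_mul (I / (a + b))
  rw [integral_of_hasDerivAt_of_tendsto hderiv
    (integrable_inv_mul_sub_I_mul_add_I_mul ha.ne' hb.ne') hbot htop]
  field_simp
  push_cast
  linear_combination (-2 * π : ℂ) * I_sq

theorem integral_pow_div_pow_add_two_eq_zero {σ : ℝ} (hσ : σ ≠ 0) (m : ℕ) :
    ∫ ξ : ℝ, ((σ : ℂ) + I * ξ) ^ m / ((σ : ℂ) - I * ξ) ^ (m + 2) = 0 := by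
  set c : ℂ := (2 * σ * (m + 1) * I)⁻¹
  have hσ' : (σ : ℂ) ≠ 0 := by exact_mod_cast hσ
  have hderiv : ∀ ξ : ℝ,
      HasDerivAt (fun ξ : ℝ => c * (((σ : ℂ) + I * ξ) / ((σ : ℂ) - I * ξ)) ^ (m + 1))
        (((σ : ℂ) + I * ξ) ^ m / ((σ : ℂ) - I * ξ) ^ (m + 2)) ξ := by
    intro ξ
    have hy := sub_I_mul_ne_zero (w := σ) (by simpa using hσ) ξ
    refine ((((hasDerivAt_add_I_mul σ ξ).div (hasDerivAt_sub_I_mul σ ξ) hy).pow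
      (m + 1)).const_mul c).congr_deriv ?_
    simp only [c, Pi.div_apply, Nat.add_sub_cancel, div_pow]
    field_simp
    push_cast
    ring
  have hlim : Tendsto (fun ξ : ℝ => c * (((σ : ℂ) + I * ξ) / ((σ : ℂ) - I * ξ)) ^ (m + 1))
      (cobounded ℝ) (𝓝 (c * (-1) ^ (m + 1))) := by
    refine (((tendsto_add_I_mul_div_add_I_mul σ (-σ)).neg.pow (m + 1)).const_mul c).congr
      fun ξ => ?_
    rw [show -(σ : ℂ) + I * ξ = -((σ : ℂ) - I * ξ) by ring, div_neg, neg_neg]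
  rw [integral_of_hasDerivAt_of_tendsto hderiv (integrable_pow_div_pow_add_two hσ m)
    (hlim.mono_left IsOrderBornology.atBot_le_cobounded)
    (hlim.mono_left IsOrderBornology.atTop_le_cobounded), sub_self]

lemma pow_succ_div_pow_add_two_mul_one_div {K : Type*} [Field K] {x y z : K} (hy : y ≠ 0)
    (hz : z ≠ 0) (hyz : y + z ≠ 0) (m : ℕ) :
    x ^ (m + 1) / y ^ (m + 2) * (1 / z) =
      (x - z) / (y + z) * (x ^ m / y ^ (m + 1) * (1 / z)) +
        (x + y) / (y + z) * (x ^ m / y ^ (m + 2)) := by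
  field_simp
  ring

theorem integral_pow_div_pow_succ_mul_one_div {σ : ℝ} (hσ : 0 < σ) {κ : ℂ} (hκ : 0 < κ.re)
    (m : ℕ) :
    ∫ ξ : ℝ, ((σ : ℂ) + I * ξ) ^ m / ((σ : ℂ) - I * ξ) ^ (m + 1) * (1 / (κ + I * ξ)) =
      2 * π * ((σ : ℂ) - κ) ^ m / ((σ : ℂ) + κ) ^ (m + 1) := by
  have hσκ : (σ : ℂ) + κ ≠ 0 := fun h => by
    have := congrArg re h
    simp only [add_re, ofReal_re, zero_re] at this
    linarith
  induction m with
  | zero =>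
    simp only [pow_zero, zero_add, pow_one, one_div, ← mul_inv, mul_one]
    exact integral_inv_mul_sub_I_mul_add_I_mul (a := σ) (by simpa using hσ) hκ
  | succ m ih =>
    have hre : (σ : ℂ).re ≠ 0 := by simpa using hσ.ne'
    have hsplit : ∀ ξ : ℝ,
        ((σ : ℂ) + I * ξ) ^ (m + 1) / ((σ : ℂ) - I * ξ) ^ (m + 2) * (1 / (κ + I * ξ)) =
          ((σ : ℂ) - κ) / (σ + κ) *
              (((σ : ℂ) + I * ξ) ^ m / ((σ : ℂ) - I * ξ) ^ (m + 1) * (1 / (κ + I * ξ))) +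
            2 * σ / (σ + κ) * (((σ : ℂ) + I * ξ) ^ m / ((σ : ℂ) - I * ξ) ^ (m + 2)) :=
      fun ξ => by
        convert pow_succ_div_pow_add_two_mul_one_div (sub_I_mul_ne_zero hre ξ)
          (add_I_mul_ne_zero hκ.ne' ξ) (by convert hσκ using 1; ring) m using 3 <;> ring
    simp_rw [hsplit]
    rw [integral_add ((integrable_pow_div_pow_succ_mul_one_div hσ.ne' hκ.ne' m).const_mul _)
        ((integrable_pow_div_pow_add_two hσ.ne' m).const_mul _),
      integral_const_mul, integral_const_mul, ih, integral_pow_div_pow_add_two_eq_zero hσ.ne',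
      mul_zero, add_zero]
    field_simp
    ring

/-- Base case (j = 1) of Lemma 3.2: residue computation of the Laguerre-type integral. -/
theorem laguerre_integral_simple_pole (σ : ℝ) (hσ : 0 < σ) (κ : ℂ) (hκ : 0 < κ.re) (m : ℕ) :
    (1 / (2 * (Real.pi : ℂ))) *
      ∫ ξ : ℝ, (((σ : ℂ) + I * ξ) ^ m / ((σ : ℂ) - I * ξ) ^ (m + 1)) * (1 / (κ + I * ξ)) =
    ((σ : ℂ) - κ) ^ m / ((σ : ℂ) + κ) ^ (m + 1) := by
  rw [integral_pow_div_pow_succ_mul_one_div hσ hκ m]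
  have hπ : (π : ℂ) ≠ 0 := ofReal_ne_zero.mpr Real.pi_ne_zero
  field_simp
end

section
/- For all integers l > m ≥ 0, every integer j ≥ 1, every σ > 0, and every κ ∈ ℂ with Re κ > 0: (1/2π) ∫_ℝ ((σ−iξ)^l/(σ+iξ)^{l+1}) · ((σ+iξ)^m/(σ−iξ)^{m+1}) · (κ+iξ)^{−j} dξ = 0. -/
open MeasureTheory Complex

open Set Filter Topology FourierTransform Real
open scoped Nat

/-!
Writing `σ - iξ = 2σ - (σ + iξ)` and expanding binomially, the integrand becomes a linear
combination of `(σ + iξ)^{-(k+2)} (κ + iξ)^{-j}`. Up to `n!`, `(b + 2πiw)^{-(n+1)}` is the Fourier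
transform of the one-sided function `t ↦ tⁿ e^{-bt}` on `(0, ∞)` (a Laplace transform, computed by
integration by parts). For two integrable `f, g` vanishing on `(-∞, 0)` with `𝓕 g` integrable,
`∫ 𝓕f · 𝓕g = ∫ f · 𝓕(𝓕g)` and `𝓕(𝓕g)(x) = g(-x)` by Fourier inversion, so the integral is zero:
this is the Fourier-side form of closing the contour in the lower half-plane.
-/

section Laplace

lemma hasDerivAt_cexp_neg_mul (b : ℂ) (t : ℝ) :
    HasDerivAt (fun t : ℝ => cexp (-(b * t))) (-b * cexp (-(b * t))) t := by
  have h := ((hasDerivAt_id (t : ℂ)).const_mul (-b)).cexp.comp_ofReal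
  simp only [id, mul_one, neg_mul] at h
  rwa [mul_comm]

lemma hasDerivAt_pow_succ_mul_cexp_neg_mul (b : ℂ) (n : ℕ) (t : ℝ) :
    HasDerivAt (fun t : ℝ => (t : ℂ) ^ (n + 1) * cexp (-(b * t)))
      ((n + 1) * ((t : ℂ) ^ n * cexp (-(b * t))) - b * ((t : ℂ) ^ (n + 1) * cexp (-(b * t)))) t := by
  refine (((hasDerivAt_pow (n + 1) (t : ℂ)).comp_ofReal).mul
    (hasDerivAt_cexp_neg_mul b t)).congr_deriv ?_
  push_cast
  ring

variable {b : ℂ}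

lemma norm_pow_mul_cexp_neg_mul {t : ℝ} (ht : 0 ≤ t) (n : ℕ) :
    ‖(t : ℂ) ^ n * cexp (-(b * t))‖ = t ^ n * rexp (-(b.re * t)) := by
  rw [norm_mul, norm_pow, norm_exp, norm_real, Real.norm_of_nonneg ht]
  simp

lemma integrableOn_pow_mul_cexp_neg_mul_Ioi (hb : 0 < b.re) (n : ℕ) :
    IntegrableOn (fun t : ℝ => (t : ℂ) ^ n * cexp (-(b * t))) (Ioi 0) := by
  have h := integrableOn_rpow_mul_exp_neg_mul_rpow (p := 1)
    (neg_one_lt_zero.trans_le n.cast_nonneg) one_pos hb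
  refine h.mono' (by fun_prop) ((ae_restrict_mem measurableSet_Ioi).mono fun t ht => ?_)
  rw [norm_pow_mul_cexp_neg_mul (le_of_lt ht)]
  simp

lemma tendsto_pow_mul_cexp_neg_mul_atTop (hb : 0 < b.re) (n : ℕ) :
    Tendsto (fun t : ℝ => (t : ℂ) ^ n * cexp (-(b * t))) atTop (𝓝 0) := by
  rw [tendsto_zero_iff_norm_tendsto_zero]
  refine (tendsto_rpow_mul_exp_neg_mul_atTop_nhds_zero n _ hb).congr' ?_
  filter_upwards [eventually_ge_atTop 0] with t ht
  rw [norm_pow_mul_cexp_neg_mul ht]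
  simp

theorem integral_pow_mul_cexp_neg_mul_Ioi (hb : 0 < b.re) (n : ℕ) :
    ∫ t in Ioi (0 : ℝ), (t : ℂ) ^ n * cexp (-(b * t)) = n ! / b ^ (n + 1) := by
  have hb0 : b ≠ 0 := fun h => by simp [h] at hb
  have hI := integrableOn_pow_mul_cexp_neg_mul_Ioi hb
  induction n with
  | zero =>
    simpa [neg_mul] using integral_exp_mul_complex_Ioi (a := -b) (by simpa using hb) 0
  | succ n ih =>
    -- integration by parts: `(n + 1) Iₙ = b Iₙ₊₁`
    have hibp := integral_Ioi_of_hasDerivAt_of_tendsto' (a := 0)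
      (fun t _ => hasDerivAt_pow_succ_mul_cexp_neg_mul b n t)
      (((hI n).const_mul _).sub ((hI (n + 1)).const_mul _))
      (tendsto_pow_mul_cexp_neg_mul_atTop hb (n + 1))
    rw [integral_sub ((hI n).const_mul _) ((hI (n + 1)).const_mul _), integral_const_mul,
      integral_const_mul, ih, ofReal_zero, zero_pow n.succ_ne_zero, zero_mul, sub_self] at hibp
    field_simp at hibp
    rw [Nat.factorial_succ, eq_div_iff (pow_ne_zero _ hb0)]
    push_cast
    linear_combination -hibp

end Laplace

section Fourier

theorem integral_fourier_mul_fourier_eq_zero {f g : ℝ → ℂ} (hf : Integrable f)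
    (hg : Integrable g) (hFg : Integrable (𝓕 g)) (hf0 : ∀ x < 0, f x = 0)
    (hg0 : ∀ x < 0, g x = 0) :
    ∫ w, 𝓕 f w * 𝓕 g w = 0 := by
  have hflip : ∫ w, 𝓕 f w * 𝓕 g w = ∫ x, f x * 𝓕 (𝓕 g) x := by
    simpa using! VectorFourier.integral_fourierIntegral_smul_eq_flip (L := innerₗ ℝ)
      Real.continuous_fourierChar continuous_inner hf hFg
  have hFFg : ∀ x > 0, 𝓕 (𝓕 g) x = 0 := fun x hx => by
    have hcont : ContinuousAt g (-x) := continuousAt_const.congr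
      (eventually_of_mem (Iio_mem_nhds (neg_neg_of_pos hx)) fun y hy => (hg0 y hy).symm)
    rw [← neg_neg x, ← fourierInv_eq_fourier_neg, hg.fourierInv_fourier_eq hFg hcont,
      hg0 _ (neg_neg_of_pos hx)]
  rw [hflip]
  refine integral_eq_zero_of_ae ((Measure.ae_ne volume 0).mono fun x hx => ?_)
  rcases hx.lt_or_gt with hx | hx
  · simp [hf0 x hx]
  · simp [hFFg x hx]

variable {b : ℂ}

noncomputable def oneSidedPowExp (n : ℕ) (b : ℂ) : ℝ → ℂ :=
  (Ioi 0).indicator fun t => (t : ℂ) ^ n * cexp (-(b * t))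

lemma integrable_oneSidedPowExp (hb : 0 < b.re) (n : ℕ) : Integrable (oneSidedPowExp n b) :=
  (integrableOn_pow_mul_cexp_neg_mul_Ioi hb n).integrable_indicator measurableSet_Ioi

lemma oneSidedPowExp_of_nonpos (n : ℕ) (b : ℂ) {t : ℝ} (ht : t ≤ 0) : oneSidedPowExp n b t = 0 :=
  indicator_of_notMem (not_lt.mpr ht) _

theorem fourier_oneSidedPowExp (hb : 0 < b.re) (n : ℕ) (w : ℝ) :
    𝓕 (oneSidedPowExp n b) w = n ! / (b + I * ↑(2 * π * w)) ^ (n + 1) := by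
  have hbw : 0 < (b + I * ↑(2 * π * w)).re := by simpa using hb
  rw [fourier_real_eq_integral_exp_smul, ← integral_pow_mul_cexp_neg_mul_Ioi hbw n,
    ← integral_indicator measurableSet_Ioi]
  congr 1 with v
  by_cases hv : v ∈ Ioi 0
  · rw [oneSidedPowExp, indicator_of_mem hv, indicator_of_mem hv, smul_eq_mul, mul_left_comm,
      ← Complex.exp_add]
    congr 2
    push_cast
    ring
  · simp [oneSidedPowExp, indicator_of_notMem hv]

end Fourier

lemma norm_inv_pow_add_I_mul_le {c : ℂ} (hc : c.re ≠ 0) (n : ℕ) (ξ : ℝ) :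
    ‖((c + I * ξ) ^ n)⁻¹‖ ≤ (|c.re| ^ n)⁻¹ := by
  rw [norm_inv, norm_pow]
  gcongr
  simpa using abs_re_le_norm (c + I * ξ)

lemma integrable_inv_pow_ofReal_add_I_mul {σ : ℝ} (hσ : σ ≠ 0) (n : ℕ) :
    Integrable fun ξ : ℝ => (((σ : ℂ) + I * ξ) ^ (n + 2))⁻¹ := by
  have hmin : 0 < min (σ ^ 2) 1 := lt_min (by positivity) one_pos
  refine (integrable_inv_one_add_sq.const_mul (|σ| ^ n * min (σ ^ 2) 1)⁻¹).mono'
    (by fun_prop) (.of_forall fun ξ => ?_)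
  have hre : |σ| ≤ ‖(σ : ℂ) + I * ξ‖ := by simpa using abs_re_le_norm ((σ : ℂ) + I * ξ)
  have hsq : min (σ ^ 2) 1 * (1 + ξ ^ 2) ≤ ‖(σ : ℂ) + I * ξ‖ ^ 2 := by
    rw [Complex.sq_norm, normSq_apply]
    simp only [add_re, ofReal_re, mul_re, I_re, ofReal_im, I_im, add_im, mul_im]
    nlinarith [min_le_left (σ ^ 2) 1, min_le_right (σ ^ 2) 1, sq_nonneg ξ]
  rw [norm_inv, norm_pow, ← mul_inv, pow_add, mul_assoc]
  gcongr

lemma integrable_inv_pow_add_I_mul {b : ℂ} (hb : b.re ≠ 0) (n : ℕ) :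
    Integrable fun ξ : ℝ => ((b + I * ξ) ^ (n + 2))⁻¹ := by
  convert (integrable_inv_pow_ofReal_add_I_mul hb n).comp_add_right b.im using 4 with ξ
  apply Complex.ext <;> simp [add_comm]

lemma integrable_inv_pow_mul_inv_pow {b c : ℂ} (hb : b.re ≠ 0) (hc : c.re ≠ 0) (p q : ℕ) :
    Integrable fun ξ : ℝ => ((b + I * ξ) ^ (p + 2))⁻¹ * ((c + I * ξ) ^ q)⁻¹ :=
  (integrable_inv_pow_add_I_mul hb p).mul_bdd (by fun_prop)
    (.of_forall (norm_inv_pow_add_I_mul_le hc q))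

theorem integral_inv_pow_mul_inv_pow_eq_zero {b c : ℂ} (hb : 0 < b.re) (hc : 0 < c.re)
    (p q : ℕ) : ∫ ξ : ℝ, ((b + I * ξ) ^ (p + 2))⁻¹ * ((c + I * ξ) ^ (q + 1))⁻¹ = 0 := by
  set F := fun ξ : ℝ => ((b + I * ξ) ^ (p + 2))⁻¹ * ((c + I * ξ) ^ (q + 1))⁻¹
  have hF : ∀ w : ℝ, F (2 * π * w) =
      𝓕 (oneSidedPowExp q c) w * 𝓕 (oneSidedPowExp (p + 1) b) w / (q ! * (p + 1) !) := by
    intro w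
    have hq : (q ! : ℂ) ≠ 0 := by exact_mod_cast q.factorial_ne_zero
    have hp : ((p + 1) ! : ℂ) ≠ 0 := by exact_mod_cast (p + 1).factorial_ne_zero
    simp only [F, fourier_oneSidedPowExp hc, fourier_oneSidedPowExp hb]
    field_simp
  have hFb : Integrable (𝓕 (oneSidedPowExp (p + 1) b)) := by
    refine (((integrable_inv_pow_add_I_mul hb.ne' p).comp_mul_left' two_pi_pos.ne').const_mul
      ((p + 1) ! : ℂ)).congr (.of_forall fun w => ?_)
    rw [fourier_oneSidedPowExp hb, div_eq_mul_inv]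
  have h2π : ∫ w : ℝ, F (2 * π * w) = 0 := by
    simp_rw [hF, integral_div, integral_fourier_mul_fourier_eq_zero
      (integrable_oneSidedPowExp hc q) (integrable_oneSidedPowExp hb _) hFb
      (fun x hx => oneSidedPowExp_of_nonpos _ _ hx.le)
      (fun x hx => oneSidedPowExp_of_nonpos _ _ hx.le), zero_div]
  rw [Measure.integral_comp_mul_left] at h2π
  exact (smul_eq_zero.mp h2π).resolve_left (by positivity)

lemma sub_pow_div_pow_eq_sum {K : Type*} [Field K] (a : K) {u : K} (hu : u ≠ 0) (d : ℕ) :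
    (a - u) ^ d / u ^ (d + 2) =
      ∑ k ∈ Finset.range (d + 1), (-1) ^ (k + d) * a ^ k * d.choose k * (u ^ (k + 2))⁻¹ := by
  rw [sub_pow, Finset.sum_div]
  refine Finset.sum_congr rfl fun k hk => ?_
  obtain ⟨i, rfl⟩ := Nat.exists_eq_add_of_le (Nat.lt_succ_iff.mp (Finset.mem_range.mp hk))
  rw [Nat.add_sub_cancel_left]
  field_simp
  ring

lemma laguerre_product_eq_sum {K : Type*} [Field K] (a : K) {u : K} (hu : u ≠ 0)
    (hv : a - u ≠ 0) (m d : ℕ) :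
    (a - u) ^ (m + 1 + d) / u ^ (m + 1 + d + 1) * (u ^ m / (a - u) ^ (m + 1)) =
      ∑ k ∈ Finset.range (d + 1), (-1) ^ (k + d) * a ^ k * d.choose k * (u ^ (k + 2))⁻¹ := by
  rw [← sub_pow_div_pow_eq_sum a hu]
  field_simp
  ring

/-- Lemma 5.2, case `m < l`: the vanishing of `s⁺_{j,l,m}`. -/
theorem laguerre_product_integral_vanishes (l m : ℕ) (hlm : m < l) (j : ℕ) (hj : 1 ≤ j)
    (σ : ℝ) (hσ : 0 < σ) (κ : ℂ) (hκ : 0 < κ.re) :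
    (1 / (2 * (Real.pi : ℂ))) *
      ∫ ξ : ℝ, (((σ : ℂ) - I * ξ) ^ l / ((σ : ℂ) + I * ξ) ^ (l + 1)) *
        (((σ : ℂ) + I * ξ) ^ m / ((σ : ℂ) - I * ξ) ^ (m + 1)) *
        (κ + I * ξ) ^ (-(j : ℤ)) = 0 := by
  obtain ⟨d, rfl⟩ : ∃ d, l = m + 1 + d := ⟨l - m - 1, by omega⟩
  obtain ⟨q, rfl⟩ : ∃ q, j = q + 1 := ⟨j - 1, by omega⟩
  have hu : ∀ ξ : ℝ, (σ : ℂ) + I * ξ ≠ 0 := fun ξ h => by simpa [hσ.ne'] using congr_arg re h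
  have hv : ∀ ξ : ℝ, 2 * (σ : ℂ) - ((σ : ℂ) + I * ξ) ≠ 0 := fun ξ h => by
    simpa [two_mul, hσ.ne'] using congr_arg re h
  have hσ' : 0 < (σ : ℂ).re := by simpa using hσ
  simp_rw [show ∀ ξ : ℝ, (σ : ℂ) - I * ξ = 2 * σ - (σ + I * ξ) from fun ξ => by ring,
    laguerre_product_eq_sum _ (hu _) (hv _), zpow_neg, zpow_natCast, Finset.sum_mul, mul_assoc]
  rw [integral_finsetSum _ fun k _ =>
    (((integrable_inv_pow_mul_inv_pow hσ'.ne' hκ.ne' k _).const_mul _).const_mul _).const_mul _]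
  simp [integral_const_mul, integral_inv_pow_mul_inv_pow_eq_zero hσ' hκ]
end

section
/- Let a, b, c ∈ ℂ with Re(at² + bt + c) > 0 for every t ∈ ℝ, let k ≥ 1 be an integer, and let σ > 0. For each μ > 0 suppose κ⁺(μ), κ⁻(μ) ∈ ℂ with Re κ⁺(μ) > 0, Re κ⁻(μ) > 0 and aξ² + bξ + c + μ² = a(κ⁺(μ)+iξ)(κ⁻(μ)−iξ) for all ξ ∈ ℝ, and suppose c⁺_j(μ), c⁻_j(μ) ∈ ℂ (1 ≤ j ≤ k) satisfy the partial fraction identity (aξ² + bξ + c + μ²)^{−k} = Σ_{j=1}^k c⁺_j(μ)/(κ⁺(μ)+iξ)^j + Σ_{j=1}^k c⁻_j(μ)/(κ⁻(μ)−iξ)^j for all ξ ∈ ℝ. Then μ^{2k} · ( Σ_{j=1}^k c⁺_j(μ)/(κ⁺(μ)+σ)^j + Σ_{j=1}^k c⁻_j(μ)/(κ⁻(μ)+σ)^j ) → 1 as μ → +∞. -/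
/-!
Put `S = κ⁺ + κ⁻`. Since `κ⁻ - iξ = S - (κ⁺ + iξ)`, the hypothesis is a partial fraction
decomposition of `1 / (a x (S - x))^k` along the line `x = κ⁺ + iξ`, hence (clearing denominators
and using that a polynomial with infinitely many roots vanishes) everywhere. Substituting `x = S w`
turns it into the decomposition of `1 / (w (1 - w))^k`, which is unique: the rescaled coefficients
`c^±_j (a S²)^k / S^j` do not depend on `μ`. Therefore
`μ^{2k} α(μ) = (μ² / (a S²))^k (P⁺((κ⁺ + σ) / S) + P⁻((κ⁻ + σ) / S))` with fixed polynomials `P^±`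
in `1 / w`. The factorisation gives `a S² = 4 μ² + 4 c - b² / a` and `κ⁺ - κ⁻ = i b / a`, so
`μ² / (a S²) → 1/4` and both arguments tend to `1/2`, where `P⁺ + P⁻` equals `4^k`.
-/

open Complex Filter Polynomial Finset Topology

noncomputable section

def principalPart (k : ℕ) (u : ℕ → ℂ) (x : ℂ) : ℂ := ∑ j ∈ Icc 1 k, u j / x ^ j

def clearedNumerator (k : ℕ) (u v : ℕ → ℂ) : ℂ[X] :=
  ∑ j ∈ Icc 1 k, C (u j) * X ^ (k - j) * (1 - X) ^ k +
    ∑ j ∈ Icc 1 k, C (v j) * X ^ k * (1 - X) ^ (k - j)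

theorem principalPart_congr {k : ℕ} {u v : ℕ → ℂ} (h : ∀ j ∈ Icc 1 k, u j = v j) :
    principalPart k u = principalPart k v :=
  funext fun x => sum_congr rfl fun j hj => by rw [h j hj]

theorem eval_clearedNumerator (k : ℕ) (u v : ℕ → ℂ) {w : ℂ} (h0 : w ≠ 0) (h1 : w ≠ 1) :
    (clearedNumerator k u v).eval w =
      (principalPart k u w + principalPart k v (1 - w)) * (w * (1 - w)) ^ k := by
  have h1' : 1 - w ≠ 0 := sub_ne_zero.mpr h1.symm
  simp only [clearedNumerator, principalPart, eval_add, eval_finsetSum, eval_mul, eval_C,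
    eval_pow, eval_X, eval_sub, eval_one, add_mul, sum_mul, mul_pow]
  congr 1 <;> refine sum_congr rfl fun j hj => ?_
  · rw [pow_sub₀ _ h0 (mem_Icc.1 hj).2]; ring
  · rw [pow_sub₀ _ h1' (mem_Icc.1 hj).2]; ring

theorem clearedNumerator_eq_one_of_infinite {k : ℕ} {u v : ℕ → ℂ} {s : Set ℂ} (hs : s.Infinite)
    (h : ∀ w ∈ s, w ≠ 0 ∧ w ≠ 1 ∧
      principalPart k u w + principalPart k v (1 - w) = ((w * (1 - w)) ^ k)⁻¹) :
    clearedNumerator k u v = 1 := by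
  refine eq_of_infinite_eval_eq _ _ (hs.mono fun w hw => ?_)
  obtain ⟨h0, h1, hw⟩ := h w hw
  have : (w * (1 - w)) ^ k ≠ 0 := pow_ne_zero _ (mul_ne_zero h0 (sub_ne_zero.mpr h1.symm))
  simp [eval_clearedNumerator k u v h0 h1, hw, this]

theorem principalPart_add_of_clearedNumerator_eq_one {k : ℕ} {u v : ℕ → ℂ}
    (h : clearedNumerator k u v = 1) {w : ℂ} (h0 : w ≠ 0) (h1 : w ≠ 1) :
    principalPart k u w + principalPart k v (1 - w) = ((w * (1 - w)) ^ k)⁻¹ := by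
  have := eval_clearedNumerator k u v h0 h1
  rw [h, eval_one] at this
  exact eq_inv_of_mul_eq_one_left this.symm

theorem clearedNumerator_sub (k : ℕ) (u v u' v' : ℕ → ℂ) :
    clearedNumerator k (u - u') (v - v') = clearedNumerator k u v - clearedNumerator k u' v' := by
  simp only [clearedNumerator, Pi.sub_apply, C_sub, sub_mul, sum_sub_distrib]
  ring

theorem clearedNumerator_comp_one_sub (k : ℕ) (u v : ℕ → ℂ) :
    (clearedNumerator k u v).comp (1 - X) = clearedNumerator k v u := by
  simp only [clearedNumerator, add_comp, Polynomial.sum_comp, mul_comp, C_comp, pow_comp, X_comp,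
    sub_comp, one_comp, sub_sub_cancel]
  rw [add_comm]
  exact congrArg₂ (· + ·) (sum_congr rfl fun j _ => by ring) (sum_congr rfl fun j _ => by ring)

theorem coeff_sum_C_mul_X_pow_sub (k : ℕ) (u : ℕ → ℂ) {j : ℕ} (hj : j ∈ Icc 1 k) :
    (∑ i ∈ Icc 1 k, C (u i) * X ^ (k - i)).coeff (k - j) = u j := by
  rw [finsetSum_coeff, sum_eq_single j]
  · simp
  · intro i hi hij
    have : k - j ≠ k - i := by grind
    simp [coeff_X_pow, this]
  · exact fun h => (h hj).elim

theorem degree_sum_C_mul_X_pow_sub_lt (k : ℕ) (u : ℕ → ℂ) :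
    (∑ i ∈ Icc 1 k, C (u i) * X ^ (k - i)).degree < (k : WithBot ℕ) := by
  rw [← mem_degreeLT]
  refine Submodule.sum_mem _ fun i hi => mem_degreeLT.2 ?_
  refine (degree_C_mul_X_pow_le _ _).trans_lt ?_
  have := mem_Icc.1 hi
  exact_mod_cast (by omega : k - i < k)

theorem clearedNumerator_eq_zero_left {k : ℕ} {u v : ℕ → ℂ} (h : clearedNumerator k u v = 0) :
    ∀ j ∈ Icc 1 k, u j = 0 := by
  set P : ℂ[X] := ∑ i ∈ Icc 1 k, C (u i) * X ^ (k - i) with hPdef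
  have hsplit : clearedNumerator k u v =
      P * (1 - X) ^ k + X ^ k * ∑ j ∈ Icc 1 k, C (v j) * (1 - X) ^ (k - j) := by
    simp only [clearedNumerator, P, sum_mul, mul_sum]
    exact congrArg₂ (· + ·) (sum_congr rfl fun j _ => by ring) (sum_congr rfl fun j _ => by ring)
  have hcop : IsCoprime ((X : ℂ[X]) ^ k) ((1 - X) ^ k) :=
    IsCoprime.pow ⟨1, 1, by ring⟩
  have hdvd : X ^ k ∣ P := hcop.dvd_of_dvd_mul_right
    ⟨-∑ j ∈ Icc 1 k, C (v j) * (1 - X) ^ (k - j), by linear_combination hsplit.symm.trans h⟩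
  have hP : P = 0 := eq_zero_of_dvd_of_degree_lt hdvd (by
    simpa using degree_sum_C_mul_X_pow_sub_lt k u)
  intro j hj
  rw [← coeff_sum_C_mul_X_pow_sub k u hj, ← hPdef, hP, coeff_zero]

theorem eq_of_clearedNumerator_eq {k : ℕ} {u v u' v' : ℕ → ℂ}
    (h : clearedNumerator k u v = clearedNumerator k u' v') :
    ∀ j ∈ Icc 1 k, u j = u' j ∧ v j = v' j := by
  have h0 : clearedNumerator k (u - u') (v - v') = 0 := by
    rw [clearedNumerator_sub, h, sub_self]
  have h0' : clearedNumerator k (v - v') (u - u') = 0 := by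
    rw [← clearedNumerator_comp_one_sub, h0, zero_comp]
  intro j hj
  exact ⟨sub_eq_zero.1 (clearedNumerator_eq_zero_left h0 j hj),
    sub_eq_zero.1 (clearedNumerator_eq_zero_left h0' j hj)⟩

/-- The coefficients of the partial fraction decomposition of `1 / (a x (S - x)) ^ k` become those
of `1 / (w (1 - w)) ^ k` under the substitution `x = S w`. -/
def rescaledCoeff (k : ℕ) (a S : ℂ) (u : ℕ → ℂ) (j : ℕ) : ℂ := u j * (a * S ^ 2) ^ k / S ^ j

theorem principalPart_rescaledCoeff (k : ℕ) (a : ℂ) {S : ℂ} (hS : S ≠ 0) (u : ℕ → ℂ) (x : ℂ) :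
    principalPart k (rescaledCoeff k a S u) (x / S) = (a * S ^ 2) ^ k * principalPart k u x := by
  simp only [principalPart, rescaledCoeff, mul_sum, div_pow]
  refine sum_congr rfl fun j _ => ?_
  field_simp

theorem mul_principalPart_add_eq_rescaled (k : ℕ) {a S : ℂ} (ha : a ≠ 0) (hS : S ≠ 0)
    (M : ℂ) (u v : ℕ → ℂ) (x y : ℂ) :
    M ^ k * (principalPart k u x + principalPart k v y) =
      (M / (a * S ^ 2)) ^ k * (principalPart k (rescaledCoeff k a S u) (x / S) +
        principalPart k (rescaledCoeff k a S v) (y / S)) := by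
  rw [principalPart_rescaledCoeff k a hS, principalPart_rescaledCoeff k a hS, ← mul_add, div_pow]
  field_simp

theorem clearedNumerator_rescaledCoeff_eq_one {k : ℕ} {a p q : ℂ} {u v : ℕ → ℂ} (ha : a ≠ 0)
    (hp : 0 < p.re) (hq : 0 < q.re)
    (h : ∀ ξ : ℝ, principalPart k u (p + I * ξ) + principalPart k v (q - I * ξ) =
      ((a * (p + I * ξ) * (q - I * ξ)) ^ k)⁻¹) :
    clearedNumerator k (rescaledCoeff k a (p + q) u) (rescaledCoeff k a (p + q) v) = 1 := by
  have hS : p + q ≠ 0 := ne_zero_of_re_pos (by simpa using add_pos hp hq)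
  refine clearedNumerator_eq_one_of_infinite (s := Set.range fun ξ : ℝ => (p + I * ξ) / (p + q))
    (Set.infinite_range_of_injective fun ξ η hξη => ?_) ?_
  · simpa [I_ne_zero] using (div_left_inj' hS).1 hξη
  rintro _ ⟨ξ, rfl⟩
  have hx : p + I * ξ ≠ 0 := ne_zero_of_re_pos (by simpa using hp)
  have hy : q - I * ξ ≠ 0 := ne_zero_of_re_pos (by simpa using hq)
  have h1w : 1 - (p + I * ξ) / (p + q) = (q - I * ξ) / (p + q) := by field_simp; ring
  refine ⟨div_ne_zero hx hS, fun h1 => hy ?_, ?_⟩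
  · rw [div_eq_one_iff_eq hS] at h1
    linear_combination -h1
  · rw [h1w, principalPart_rescaledCoeff k a hS, principalPart_rescaledCoeff k a hS, ← mul_add, h ξ,
      ← inv_pow, ← inv_pow, ← mul_pow]
    congr 1
    field_simp

theorem mul_mul_eq_of_factor {a b c p q : ℂ} {μ : ℝ}
    (h : ∀ ξ : ℝ, a * (ξ : ℂ) ^ 2 + b * ξ + c + (μ : ℂ) ^ 2 = a * (p + I * ξ) * (q - I * ξ)) :
    a * p * q = c + (μ : ℂ) ^ 2 := by
  simpa using (h 0).symm

theorem mul_sub_eq_of_factor {a b c p q : ℂ} {μ : ℝ}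
    (h : ∀ ξ : ℝ, a * (ξ : ℂ) ^ 2 + b * ξ + c + (μ : ℂ) ^ 2 = a * (p + I * ξ) * (q - I * ξ)) :
    a * (p - q) = I * b := by
  have h0 := h 0
  have h1 := h 1
  push_cast at h0 h1
  linear_combination -I * (h1 - h0) + (a * (p - q) + a * I) * I_sq

theorem mul_add_sq_eq_of_factor {a b c p q : ℂ} {μ : ℝ} (ha : a ≠ 0)
    (h : ∀ ξ : ℝ, a * (ξ : ℂ) ^ 2 + b * ξ + c + (μ : ℂ) ^ 2 = a * (p + I * ξ) * (q - I * ξ)) :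
    a * (p + q) ^ 2 = 4 * (μ : ℂ) ^ 2 + (4 * c - b ^ 2 / a) := by
  have hpq := mul_mul_eq_of_factor h
  have hsub := mul_sub_eq_of_factor h
  field_simp
  linear_combination 4 * a * hpq + (a * (p - q) + I * b) * hsub + b ^ 2 * I_sq

theorem ne_zero_of_factor {a b c : ℂ} {κp κm : ℝ → ℂ}
    (h : ∀ μ : ℝ, 0 < μ → ∀ ξ : ℝ,
      a * (ξ : ℂ) ^ 2 + b * ξ + c + (μ : ℂ) ^ 2 = a * (κp μ + I * ξ) * (κm μ - I * ξ)) :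
    a ≠ 0 := by
  intro ha
  have h1 := mul_mul_eq_of_factor (h 1 one_pos)
  have h2 := mul_mul_eq_of_factor (h 2 two_pos)
  rw [ha] at h1 h2
  push_cast at h1 h2
  have : (3 : ℂ) = 0 := by linear_combination h1 - h2
  norm_num at this

theorem continuousAt_principalPart (k : ℕ) (u : ℕ → ℂ) {x : ℂ} (hx : x ≠ 0) :
    ContinuousAt (principalPart k u) x := by
  unfold principalPart
  fun_prop (disch := exact pow_ne_zero _ hx)

theorem tendsto_pow_mul_principalPart_add {α : Type*} {l : Filter α} {k : ℕ} {u v : ℕ → ℂ}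
    {r x y : α → ℂ} (huv : clearedNumerator k u v = 1) (hr : Tendsto r l (𝓝 (1 / 4)))
    (hx : Tendsto x l (𝓝 (1 / 2))) (hy : Tendsto y l (𝓝 (1 / 2))) :
    Tendsto (fun t => r t ^ k * (principalPart k u (x t) + principalPart k v (y t))) l (𝓝 1) := by
  have hhalf := principalPart_add_of_clearedNumerator_eq_one huv (w := 1 / 2) (by norm_num)
    (by norm_num)
  rw [show (1 : ℂ) - 1 / 2 = 1 / 2 by norm_num] at hhalf
  have h := (hr.pow k).mul (((continuousAt_principalPart k u (by norm_num)).tendsto.comp hx).add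
    ((continuousAt_principalPart k v (by norm_num)).tendsto.comp hy))
  rwa [hhalf, ← inv_pow, ← mul_pow, show (1 / 4 : ℂ) * (1 / 2 * (1 / 2))⁻¹ = 1 by norm_num,
    one_pow] at h

theorem tendsto_nhds_zero_of_sq {α : Type*} {l : Filter α} {f : α → ℂ}
    (h : Tendsto (fun x => f x ^ 2) l (𝓝 0)) : Tendsto f l (𝓝 0) := by
  rw [tendsto_zero_iff_norm_tendsto_zero] at h ⊢
  simpa [norm_pow, Real.sqrt_sq (norm_nonneg _)] using h.sqrt

theorem tendsto_inv_ofReal_sq : Tendsto (fun μ : ℝ => ((μ : ℂ) ^ 2)⁻¹) atTop (𝓝 0) := by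
  have := (tendsto_pow_cobounded_cobounded two_ne_zero).comp
    (RCLike.tendsto_ofReal_atTop_cobounded ℂ)
  exact tendsto_inv₀_cobounded.comp this

theorem tendsto_sq_div_of_mul_sq_eq {a D : ℂ} {S : ℝ → ℂ}
    (hS : ∀ᶠ μ in atTop, a * S μ ^ 2 = 4 * (μ : ℂ) ^ 2 + D) :
    Tendsto (fun μ : ℝ => (μ : ℂ) ^ 2 / (a * S μ ^ 2)) atTop (𝓝 (1 / 4)) := by
  have h := ((tendsto_inv_ofReal_sq.const_mul D).const_add 4).inv₀
    (by norm_num : (4 + D * 0 : ℂ) ≠ 0)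
  rw [mul_zero, add_zero, ← one_div] at h
  refine h.congr' ((hS.and (eventually_ne_atTop 0)).mono fun μ ⟨hSμ, hμ⟩ => ?_)
  have hμ : (μ : ℂ) ≠ 0 := ofReal_ne_zero.mpr hμ
  dsimp only
  rw [hSμ, show 4 * (μ : ℂ) ^ 2 + D = (μ : ℂ) ^ 2 * (4 + D * ((μ : ℂ) ^ 2)⁻¹) by field_simp,
    div_mul_eq_div_div, div_self (pow_ne_zero 2 hμ), one_div]

theorem tendsto_inv_of_mul_sq_eq {a D : ℂ} {S : ℝ → ℂ} (ha : a ≠ 0)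
    (hS : ∀ᶠ μ in atTop, a * S μ ^ 2 = 4 * (μ : ℂ) ^ 2 + D) :
    Tendsto (fun μ => (S μ)⁻¹) atTop (𝓝 0) := by
  refine tendsto_nhds_zero_of_sq ?_
  have h := (tendsto_inv_ofReal_sq.const_mul a).mul (tendsto_sq_div_of_mul_sq_eq hS)
  rw [mul_zero, zero_mul] at h
  refine h.congr' ((eventually_ne_atTop 0).mono fun μ hμ => ?_)
  have hμ : (μ : ℂ) ≠ 0 := ofReal_ne_zero.mpr hμ
  by_cases hSμ : S μ = 0
  · simp [hSμ]
  · field_simp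

theorem tendsto_div_of_two_mul_eq_add {α : Type*} {l : Filter α} {S κ : α → ℂ} (e : ℂ)
    (hS : Tendsto (fun x => (S x)⁻¹) l (𝓝 0)) (hκ : ∀ᶠ x in l, S x ≠ 0 ∧ 2 * κ x = S x + e) :
    Tendsto (fun x => κ x / S x) l (𝓝 (1 / 2)) := by
  have h := (hS.const_mul (e / 2)).const_add (1 / 2)
  rw [mul_zero, add_zero] at h
  refine h.congr' (hκ.mono fun x ⟨hS0, hx⟩ => ?_)
  field_simp
  linear_combination -hx

end

theorem alpha_coefficient_one_general (a b c : ℂ)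
    (k : ℕ) (σ : ℝ)
    (κp κm : ℝ → ℂ) (cp cm : ℝ → ℕ → ℂ)
    (hκp : ∀ μ : ℝ, 0 < μ → 0 < (κp μ).re)
    (hκm : ∀ μ : ℝ, 0 < μ → 0 < (κm μ).re)
    (hfact : ∀ μ : ℝ, 0 < μ → ∀ ξ : ℝ,
      a * (ξ : ℂ) ^ 2 + b * ξ + c + (μ : ℂ) ^ 2 = a * (κp μ + I * ξ) * (κm μ - I * ξ))
    (hpf : ∀ μ : ℝ, 0 < μ → ∀ ξ : ℝ,
      1 / (a * (ξ : ℂ) ^ 2 + b * ξ + c + (μ : ℂ) ^ 2) ^ k =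
        (∑ j ∈ Finset.Icc 1 k, cp μ j / (κp μ + I * ξ) ^ j) +
        (∑ j ∈ Finset.Icc 1 k, cm μ j / (κm μ - I * ξ) ^ j)) :
    Tendsto (fun μ : ℝ => (μ : ℂ) ^ (2 * k) *
        ((∑ j ∈ Finset.Icc 1 k, cp μ j / (κp μ + (σ : ℂ)) ^ j) +
         (∑ j ∈ Finset.Icc 1 k, cm μ j / (κm μ + (σ : ℂ)) ^ j)))
      atTop (nhds 1) := by
  have ha : a ≠ 0 := ne_zero_of_factor hfact
  set S : ℝ → ℂ := fun μ => κp μ + κm μ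
  have hS : ∀ μ, 0 < μ → S μ ≠ 0 := fun μ hμ =>
    ne_zero_of_re_pos (by simpa [S] using add_pos (hκp μ hμ) (hκm μ hμ))
  have hdiff : ∀ μ, 0 < μ → κp μ - κm μ = I * b / a := fun μ hμ => by
    rw [eq_div_iff ha, mul_comm]
    exact mul_sub_eq_of_factor (hfact μ hμ)
  have hone : ∀ μ, 0 < μ → clearedNumerator k (rescaledCoeff k a (S μ) (cp μ))
      (rescaledCoeff k a (S μ) (cm μ)) = 1 := fun μ hμ =>
    clearedNumerator_rescaledCoeff_eq_one ha (hκp μ hμ) (hκm μ hμ) fun ξ => by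
      rw [← hfact μ hμ ξ, ← one_div]
      exact (hpf μ hμ ξ).symm
  have hsq : ∀ᶠ μ in atTop, a * S μ ^ 2 = 4 * (μ : ℂ) ^ 2 + (4 * c - b ^ 2 / a) :=
    (eventually_gt_atTop 0).mono fun μ hμ => mul_add_sq_eq_of_factor ha (hfact μ hμ)
  have hinv := tendsto_inv_of_mul_sq_eq ha hsq
  have hp := tendsto_div_of_two_mul_eq_add (κ := fun μ => κp μ + σ) (I * b / a + 2 * σ) hinv
    ((eventually_gt_atTop 0).mono fun μ hμ => ⟨hS μ hμ, by linear_combination hdiff μ hμ⟩)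
  have hm := tendsto_div_of_two_mul_eq_add (κ := fun μ => κm μ + σ) (-(I * b / a) + 2 * σ) hinv
    ((eventually_gt_atTop 0).mono fun μ hμ => ⟨hS μ hμ, by linear_combination -hdiff μ hμ⟩)
  refine (tendsto_pow_mul_principalPart_add (hone 1 one_pos) (tendsto_sq_div_of_mul_sq_eq hsq)
    hp hm).congr' ((eventually_gt_atTop 0).mono fun μ hμ => ?_)
  obtain ⟨hcp, hcm⟩ := forall₂_and.1
    (eq_of_clearedNumerator_eq ((hone μ hμ).trans (hone 1 one_pos).symm))
  show _ = (μ : ℂ) ^ (2 * k) *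
    (principalPart k (cp μ) (κp μ + σ) + principalPart k (cm μ) (κm μ + σ))
  symm
  rw [pow_mul, mul_principalPart_add_eq_rescaled k ha (hS μ hμ), principalPart_congr hcp,
    principalPart_congr hcm]

/-- Lemma 5.5: the coefficient of `μ^{-2k}` in the expansion of
`α(μ) = q^{∘k,+}_{-2k}(-iσ, μ) + q^{∘k,-}_{-2k}(iσ, μ)` equals `1`, i.e.
`μ^{2k} α(μ) → 1` as `μ → +∞`. -/
theorem alpha_coefficient_one (a b c : ℂ)
    (h : ∀ t : ℝ, 0 < (a * (t : ℂ) ^ 2 + b * t + c).re)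
    (k : ℕ) (hk : 1 ≤ k) (σ : ℝ) (hσ : 0 < σ)
    (κp κm : ℝ → ℂ) (cp cm : ℝ → ℕ → ℂ)
    (hκp : ∀ μ : ℝ, 0 < μ → 0 < (κp μ).re)
    (hκm : ∀ μ : ℝ, 0 < μ → 0 < (κm μ).re)
    (hfact : ∀ μ : ℝ, 0 < μ → ∀ ξ : ℝ,
      a * (ξ : ℂ) ^ 2 + b * ξ + c + (μ : ℂ) ^ 2 = a * (κp μ + I * ξ) * (κm μ - I * ξ))
    (hpf : ∀ μ : ℝ, 0 < μ → ∀ ξ : ℝ,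
      1 / (a * (ξ : ℂ) ^ 2 + b * ξ + c + (μ : ℂ) ^ 2) ^ k =
        (∑ j ∈ Finset.Icc 1 k, cp μ j / (κp μ + I * ξ) ^ j) +
        (∑ j ∈ Finset.Icc 1 k, cm μ j / (κm μ - I * ξ) ^ j)) :
    Tendsto (fun μ : ℝ => (μ : ℂ) ^ (2 * k) *
        ((∑ j ∈ Finset.Icc 1 k, cp μ j / (κp μ + (σ : ℂ)) ^ j) +
         (∑ j ∈ Finset.Icc 1 k, cm μ j / (κm μ + (σ : ℂ)) ^ j)))
      atTop (nhds 1) :=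
  alpha_coefficient_one_general a b c k σ κp κm cp cm hκp hκm hfact hpf
end
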